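/- arXiv:2510.15241 — 5 statements merged into one kernel-verified Lean document; each statement's English description precedes it below -/
import Mathlib

section
/- For any set system D = ([n], F) and any element i ∈ [n], the operations twist * i and loop complementation + i satisfy the braid-type relation: applying the sequence * i, + i, * i, + i, * i, + i (i.e., (*+) three times on element i) returns D, so that * i and + i generate a group isomorphic to the symmetric group S₃. -/
open scoped symmDiff

def twist {n : ℕ} (F : Finset (Finset (Fin n))) (i : Fin n) : Finset (Finset (Fin n)) :=
  F.image (fun X => X ∆ ({i} : Finset (Fin n)))

def loopComp {n : ℕ} (F : Finset (Finset (Fin n))) (i : Fin n) : Finset (Finset (Fin n)) :=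
  F ∆ ((F.filter (fun I => i ∉ I)).image (fun I => insert i I))

/-!
For `i ∉ X`, record whether `X` and `insert i X` are feasible as a vector `(a, b) ∈ 𝔽₂²`.
The twist `∗ i` acts on it by `(a, b) ↦ (b, a)` and the loop complementation `+ i` by
`(a, b) ↦ (a, a + b)`, so `∗ i` followed by `+ i` acts by the matrix `[[0, 1], [1, 1]]`,
whose cube is the identity over `𝔽₂`.
-/

namespace Finset

variable {α : Type*} [DecidableEq α] {i : α} {X : Finset α}

theorem symmDiff_singleton_of_notMem (hX : i ∉ X) : X ∆ {i} = insert i X := by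
  rw [(disjoint_singleton_right.mpr hX).symmDiff_eq_sup, sup_eq_union, union_comm, insert_eq]

theorem insert_symmDiff_singleton (hX : i ∉ X) : insert i X ∆ {i} = X := by
  rw [symmDiff_of_ge (singleton_subset_iff.mpr (mem_insert_self i X)), sdiff_singleton_eq_erase,
    erase_insert hX]

theorem notMem_image_insert {S : Finset (Finset α)} (hX : i ∉ X) : X ∉ S.image (insert i) := by
  rw [mem_image]
  rintro ⟨Y, -, rfl⟩
  exact hX (mem_insert_self i Y)

theorem insert_mem_image_insert {S : Finset (Finset α)} (hX : i ∉ X) :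
    insert i X ∈ (S.filter (fun Y => i ∉ Y)).image (insert i) ↔ X ∈ S := by
  simp only [mem_image, mem_filter]
  refine ⟨?_, fun h => ⟨X, ⟨h, hX⟩, rfl⟩⟩
  rintro ⟨Y, ⟨hY, hiY⟩, hYX⟩
  rwa [← erase_insert hiY, hYX, erase_insert hX] at hY

end Finset

section

variable {n : ℕ} (F : Finset (Finset (Fin n))) (i : Fin n) {X : Finset (Fin n)}

theorem mem_twist {Y : Finset (Fin n)} : Y ∈ twist F i ↔ Y ∆ {i} ∈ F := by
  simp only [twist, Finset.mem_image]
  refine ⟨?_, fun h => ⟨_, h, symmDiff_symmDiff_cancel_right _ _⟩⟩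
  rintro ⟨X, hX, rfl⟩
  rwa [symmDiff_symmDiff_cancel_right]

theorem mem_twist_of_notMem (hX : i ∉ X) : X ∈ twist F i ↔ insert i X ∈ F := by
  rw [mem_twist, Finset.symmDiff_singleton_of_notMem hX]

theorem insert_mem_twist (hX : i ∉ X) : insert i X ∈ twist F i ↔ X ∈ F := by
  rw [mem_twist, Finset.insert_symmDiff_singleton hX]

theorem mem_loopComp_of_notMem (hX : i ∉ X) : X ∈ loopComp F i ↔ X ∈ F := by
  simp only [loopComp, Finset.mem_symmDiff, Finset.notMem_image_insert hX, not_false_eq_true,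
    and_true, false_and, or_false]

theorem insert_mem_loopComp (hX : i ∉ X) :
    insert i X ∈ loopComp F i ↔ Xor (insert i X ∈ F) (X ∈ F) := by
  rw [loopComp, Finset.mem_symmDiff, Finset.insert_mem_image_insert hX]
  rfl

theorem mem_loopComp_twist_of_notMem (hX : i ∉ X) :
    X ∈ loopComp (twist F i) i ↔ insert i X ∈ F := by
  rw [mem_loopComp_of_notMem _ i hX, mem_twist_of_notMem F i hX]

theorem insert_mem_loopComp_twist (hX : i ∉ X) :
    insert i X ∈ loopComp (twist F i) i ↔ Xor (X ∈ F) (insert i X ∈ F) := by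
  rw [insert_mem_loopComp _ i hX, insert_mem_twist F i hX, mem_twist_of_notMem F i hX]

end

/-- The braid-type relation `(∗+)³ = id` on a single element: applying
`∗ i, + i, ∗ i, + i, ∗ i, + i` in sequence returns the original set system. -/
theorem braid_relation {n : ℕ} (F : Finset (Finset (Fin n))) (i : Fin n) :
    loopComp (twist (loopComp (twist (loopComp (twist F i) i) i) i) i) i = F := by
  ext Y
  obtain ⟨X, hX, rfl | rfl⟩ : ∃ X, i ∉ X ∧ (Y = X ∨ Y = insert i X) := by
    by_cases hY : i ∈ Y
    · exact ⟨Y.erase i, Finset.notMem_erase i Y, .inr (Finset.insert_erase hY).symm⟩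
    · exact ⟨Y, hY, .inl rfl⟩
  all_goals
    simp only [mem_loopComp_twist_of_notMem _ i hX, insert_mem_loopComp_twist _ i hX, Xor]
    tauto
end

section
/- For any set system D = ([n], F), subset I ⊆ [n] obtained by applying loop complementation successively on each element of I, a set X is feasible in D + I if and only if the number of sets Y ∈ F with X \ I ⊆ Y ⊆ X is odd. -/
open scoped symmDiff

/-- `D + I`: loop complementation applied successively on each element of `I`. -/
noncomputable def loopCompSet {n : ℕ} (F : Finset (Finset (Fin n))) (I : Finset (Fin n)) :
    Finset (Finset (Fin n)) :=
  I.toList.foldl loopComp F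

section aux

variable {α : Type*} [DecidableEq α]

lemma card_symmDiff_aux (s t : Finset α) :
    (s ∆ t).card + 2 * (s ∩ t).card = s.card + t.card := by
  have h1 : (s ∆ t).card = (s \ t).card + (t \ s).card := by
    rw [show s ∆ t = (s \ t) ∪ (t \ s) from rfl,
      Finset.card_union_of_disjoint disjoint_sdiff_sdiff]
  have h2 : (s \ t).card + (s ∩ t).card = s.card := Finset.card_sdiff_add_card_inter s t
  have h3 : (t \ s).card + (t ∩ s).card = t.card := Finset.card_sdiff_add_card_inter t s
  rw [Finset.inter_comm] at h3
  omega

lemma odd_card_filter_symmDiff (s t : Finset α) (p : α → Prop) [DecidablePred p] :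
    Odd ((s ∆ t).filter p).card ↔
      (Odd ((s.filter p).card + (t.filter p).card)) := by
  have h : (s ∆ t).filter p = (s.filter p) ∆ (t.filter p) := by
    ext a
    simp only [Finset.mem_filter, Finset.mem_symmDiff]
    tauto
  rw [h]
  have := card_symmDiff_aux (s.filter p) (t.filter p)
  rw [Nat.odd_iff, Nat.odd_iff]
  omega

lemma filter_image_card (s : Finset (Finset α)) (i : α) (p : Finset α → Prop)
    [DecidablePred p] :
    (((s.filter (fun I => i ∉ I)).image (fun I => insert i I)).filter p).card =
      (s.filter (fun I => i ∉ I ∧ p (insert i I))).card := by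
  have h : ((s.filter (fun I => i ∉ I)).image (fun I => insert i I)).filter p =
      (s.filter (fun I => i ∉ I ∧ p (insert i I))).image (fun I => insert i I) := by
    ext Y
    simp only [Finset.mem_filter, Finset.mem_image]
    constructor
    · rintro ⟨⟨Z, ⟨hZ, hiZ⟩, rfl⟩, hp⟩
      exact ⟨Z, ⟨hZ, hiZ, hp⟩, rfl⟩
    · rintro ⟨Z, ⟨hZ, hiZ, hp⟩, rfl⟩
      exact ⟨⟨Z, ⟨hZ, hiZ⟩, rfl⟩, hp⟩
  rw [h, Finset.card_image_of_injOn]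
  intro a ha b hb hab
  simp only [Finset.coe_filter, Set.mem_setOf_eq] at ha hb
  have : (insert i a).erase i = (insert i b).erase i := congrArg (fun Z => Finset.erase Z i) hab
  rwa [Finset.erase_insert ha.2.1, Finset.erase_insert hb.2.1] at this

end aux

lemma foldl_loopComp_mem {n : ℕ} (l : List (Fin n)) (hl : l.Nodup)
    (F : Finset (Finset (Fin n))) (X : Finset (Fin n)) :
    X ∈ l.foldl loopComp F ↔
      Odd (F.filter (fun Y => X \ l.toFinset ⊆ Y ∧ Y ⊆ X)).card := by
  induction l generalizing F with
  | nil =>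
    simp only [List.foldl_nil, List.toFinset_nil, Finset.sdiff_empty]
    have h : F.filter (fun Y => X ⊆ Y ∧ Y ⊆ X) = F.filter (fun Y => Y = X) := by
      apply Finset.filter_congr
      intro Y _
      constructor
      · rintro ⟨h1, h2⟩; exact subset_antisymm h2 h1
      · rintro rfl; exact ⟨subset_rfl, subset_rfl⟩
    rw [h]
    by_cases hX : X ∈ F
    · rw [Finset.filter_eq', if_pos hX]
      simp [hX]
    · rw [Finset.filter_eq', if_neg hX]
      simp [hX]
  | cons i l ih =>
    have hnd : l.Nodup := hl.of_cons
    have hil : i ∉ l := (List.nodup_cons.mp hl).1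
    rw [List.foldl_cons, ih hnd]
    set J := l.toFinset with hJ
    have hiJ : i ∉ J := by simp [hJ, hil]
    have hJi : (i :: l).toFinset = insert i J := by simp [hJ]
    rw [hJi]
    unfold loopComp
    set p : Finset (Fin n) → Prop := fun Y => X \ J ⊆ Y ∧ Y ⊆ X with hp
    rw [odd_card_filter_symmDiff, filter_image_card]
    -- now goal: Odd (A.card + B.card) ↔ Odd T.card
    set A := F.filter p with hA
    set B := F.filter (fun I => i ∉ I ∧ p (insert i I)) with hB
    set T := F.filter (fun Y => X \ insert i J ⊆ Y ∧ Y ⊆ X) with hT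
    by_cases hiX : i ∈ X
    · -- T = A ∪ B, disjoint
      have hsub : X \ J = insert i (X \ insert i J) := by
        ext a
        simp only [Finset.mem_sdiff, Finset.mem_insert]
        constructor
        · rintro ⟨haX, haJ⟩
          by_cases h : a = i
          · exact Or.inl h
          · exact Or.inr ⟨haX, by simp [h, haJ]⟩
        · rintro (rfl | ⟨haX, haJ⟩)
          · exact ⟨hiX, hiJ⟩
          · exact ⟨haX, fun h => haJ (Or.inr h)⟩
      have hTAB : T = A ∪ B := by
        ext Y
        simp only [hT, hA, hB, hp, Finset.mem_union, Finset.mem_filter]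
        constructor
        · rintro ⟨hYF, h1, h2⟩
          by_cases hiY : i ∈ Y
          · left
            refine ⟨hYF, ?_, h2⟩
            rw [hsub]
            exact Finset.insert_subset hiY h1
          · right
            refine ⟨hYF, hiY, ?_, Finset.insert_subset hiX h2⟩
            rw [hsub]
            exact Finset.insert_subset_insert _ h1
        · rintro (⟨hYF, h1, h2⟩ | ⟨hYF, hiY, h1, h2⟩)
          · refine ⟨hYF, ?_, h2⟩
            refine subset_trans ?_ h1
            exact Finset.sdiff_subset_sdiff subset_rfl (Finset.subset_insert _ _)
          · refine ⟨hYF, ?_, fun a ha => ?_⟩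
            · intro a ha
              have ha' : a ∈ X \ J := Finset.sdiff_subset_sdiff subset_rfl (Finset.subset_insert _ _) ha
              have := h1 ha'
              rcases Finset.mem_insert.mp this with rfl | h
              · exact absurd (Finset.mem_insert_self _ J) (Finset.mem_sdiff.mp ha).2
              · exact h
            · exact (Finset.insert_subset_iff.mp h2).2 ha
      have hdisj : Disjoint A B := by
        rw [Finset.disjoint_left]
        intro Y hYA hYB
        simp only [hA, hB, hp, Finset.mem_filter] at hYA hYB
        have hiY : i ∈ Y := hYA.2.1 (by rw [hsub]; exact Finset.mem_insert_self _ _)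
        exact hYB.2.1 hiY
      rw [hTAB, Finset.card_union_of_disjoint hdisj]
    · -- B empty, T = A
      have hB0 : B = ∅ := by
        rw [hB, Finset.filter_eq_empty_iff]
        rintro Y _ ⟨hiY, h1, h2⟩
        exact hiX (h2 (Finset.mem_insert_self _ _))
      have hTA : T = A := by
        have hXJ : X \ insert i J = X \ J := by
          ext a
          simp only [Finset.mem_sdiff, Finset.mem_insert]
          constructor
          · rintro ⟨h1, h2⟩; exact ⟨h1, fun h => h2 (Or.inr h)⟩
          · rintro ⟨h1, h2⟩
            refine ⟨h1, ?_⟩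
            rintro (rfl | h)
            · exact hiX h1
            · exact h2 h
        rw [hT, hA]
        apply Finset.filter_congr
        intro Y _
        show (X \ insert i J ⊆ Y ∧ Y ⊆ X) ↔ (X \ J ⊆ Y ∧ Y ⊆ X)
        rw [hXJ]
      rw [hTA, hB0]
      simp

/-- `X` is feasible in `D + I` iff the number of `Y ∈ F` with `X \ I ⊆ Y ⊆ X` is odd. -/
theorem mem_loopCompSet_iff_odd {n : ℕ} (F : Finset (Finset (Fin n))) (I : Finset (Fin n))
    (X : Finset (Fin n)) :
    X ∈ loopCompSet F I ↔ Odd (F.filter (fun Y => X \ I ⊆ Y ∧ Y ⊆ X)).card := by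
  rw [loopCompSet, foldl_loopComp_mem _ I.nodup_toList]
  simp only [Finset.toList_toFinset]
end

section
/- For n ≥ 3, the set system D = ([n], 2^[n] \ {[n]}) is a delta-matroid, but its loop complementation D + 1 is not a delta-matroid. -/
open scoped symmDiff

def IsDeltaMatroid {n : ℕ} (F : Finset (Finset (Fin n))) : Prop :=
  F.Nonempty ∧
    ∀ X ∈ F, ∀ Y ∈ F, ∀ u ∈ X ∆ Y, ∃ v ∈ X ∆ Y, X ∆ ({u, v} : Finset (Fin n)) ∈ F

/-- For `n ≥ 3`, the set system with feasible sets `2^[n] \ {[n]}` is a delta-matroid,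
but its loop complementation on the element `1` is not. -/
theorem deltaMatroid_not_closed_loopComp {n : ℕ} (hn : 3 ≤ n) :
    IsDeltaMatroid ((Finset.univ : Finset (Fin n)).powerset \ {Finset.univ}) ∧
      ¬ IsDeltaMatroid
        (loopComp ((Finset.univ : Finset (Fin n)).powerset \ {Finset.univ})
          ⟨0, by omega⟩) := by
  have hnpos : 0 < n := by omega
  have : NeZero n := ⟨by omega⟩
  set z : Fin n := ⟨0, by omega⟩ with hzdef
  set F : Finset (Finset (Fin n)) := (Finset.univ : Finset (Fin n)).powerset \ {Finset.univ}
    with hF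
  have hmemF : ∀ S : Finset (Fin n), S ∈ F ↔ S ≠ Finset.univ := by
    intro S; simp [hF]
  have hemptyne : (∅ : Finset (Fin n)) ≠ Finset.univ := by
    intro h
    have := Finset.univ_nonempty (α := Fin n)
    rw [← h] at this
    exact Finset.not_nonempty_empty this
  constructor
  · refine ⟨⟨∅, (hmemF _).mpr hemptyne⟩, ?_⟩
    intro X hX Y hY u hu
    rw [hmemF] at hX hY
    by_cases hXu : X ∆ ({u} : Finset (Fin n)) = Finset.univ
    · -- then u ∉ X, u ∈ Y; pick w ∉ Y
      have huX : u ∉ X := by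
        intro h
        have : u ∉ X ∆ ({u} : Finset (Fin n)) := by
          simp [Finset.mem_symmDiff, h]
        rw [hXu] at this
        exact this (Finset.mem_univ u)
      have huY : u ∈ Y := by
        rcases Finset.mem_symmDiff.mp hu with ⟨h1, _⟩ | ⟨h1, _⟩
        · exact absurd h1 huX
        · exact h1
      obtain ⟨w, hw⟩ : ∃ w, w ∉ Y := by
        by_contra h
        push_neg at h
        exact hY (Finset.eq_univ_iff_forall.mpr h)
      have hwu : w ≠ u := fun h => hw (h ▸ huY)
      have hwX : w ∈ X := by
        have : w ∈ X ∆ ({u} : Finset (Fin n)) := hXu ▸ Finset.mem_univ w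
        rcases Finset.mem_symmDiff.mp this with ⟨h1, _⟩ | ⟨h1, _⟩
        · exact h1
        · simp at h1; exact absurd h1 hwu
      refine ⟨w, Finset.mem_symmDiff.mpr (Or.inl ⟨hwX, hw⟩), (hmemF _).mpr ?_⟩
      intro h
      have : w ∉ X ∆ ({u, w} : Finset (Fin n)) := by
        simp [Finset.mem_symmDiff, hwX]
      rw [h] at this
      exact this (Finset.mem_univ w)
    · refine ⟨u, hu, ?_⟩
      have : ({u, u} : Finset (Fin n)) = {u} := by simp
      rw [this, hmemF]
      exact hXu
  · rintro ⟨-, h⟩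
    set G : Finset (Finset (Fin n)) :=
      (F.filter (fun I => z ∉ I)).image (fun I => insert z I) with hGdef
    have hcard : ∀ S : Finset (Fin n), S.card < n → S ≠ Finset.univ := by
      intro S hS hEq
      rw [hEq, Finset.card_univ, Fintype.card_fin] at hS
      omega
    have hEmem : (∅ : Finset (Fin n)) ∈ loopComp F z := by
      rw [loopComp, Finset.mem_symmDiff]
      left
      refine ⟨(hmemF _).mpr hemptyne, ?_⟩
      intro hc
      rw [Finset.mem_image] at hc
      obtain ⟨I, -, hI⟩ := hc
      have : z ∈ (∅ : Finset (Fin n)) := hI ▸ Finset.mem_insert_self z I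
      simp at this
    have hUmem : (Finset.univ : Finset (Fin n)) ∈ loopComp F z := by
      rw [loopComp, Finset.mem_symmDiff]
      right
      constructor
      · rw [Finset.mem_image]
        refine ⟨Finset.univ.erase z, ?_, ?_⟩
        · rw [Finset.mem_filter]
          refine ⟨(hmemF _).mpr ?_, Finset.notMem_erase z _⟩
          intro hEq
          have := hEq ▸ Finset.notMem_erase z (Finset.univ : Finset (Fin n))
          exact this (Finset.mem_univ z)
        · exact Finset.insert_erase (Finset.mem_univ z)
      · rw [hmemF]; simp
    obtain ⟨v, -, hv⟩ := h ∅ hEmem Finset.univ hUmem z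
      (Finset.mem_symmDiff.mpr (Or.inr ⟨Finset.mem_univ z, Finset.notMem_empty z⟩))
    rw [show (∅ : Finset (Fin n)) ∆ ({z, v}) = {z, v} from bot_symmDiff _] at hv
    have hpair : ({z, v} : Finset (Fin n)) ∈ F := by
      rw [hmemF]
      refine hcard _ (lt_of_le_of_lt ?_ (by omega : 2 < n))
      exact (Finset.card_insert_le _ _).trans (by simp)
    have hpairG : ({z, v} : Finset (Fin n)) ∈ G := by
      rw [Finset.mem_image]
      refine ⟨({z, v} : Finset (Fin n)).erase z, ?_, ?_⟩
      · rw [Finset.mem_filter]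
        refine ⟨(hmemF _).mpr (hcard _ ?_), Finset.notMem_erase z _⟩
        refine lt_of_le_of_lt (Finset.card_erase_le.trans ?_) (by omega : 2 < n)
        exact (Finset.card_insert_le _ _).trans (by simp)
      · exact Finset.insert_erase (Finset.mem_insert_self z _)
    rw [loopComp, Finset.mem_symmDiff] at hv
    rcases hv with ⟨-, h2⟩ | ⟨-, h2⟩
    · exact h2 hpairG
    · exact h2 hpair
end

section
/- For any set system D = ([n], F) and subset I ⊆ [n], a set X is feasible in D \bar{*} I if and only if the number of Y ∈ F with X ⊆ Y ⊆ X ∪ I is odd. -/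
/-!
Count modulo 2. Since `barStar F i = F ∆ F.memberSubfamily i`, the number of sets of
`barStar F i` in an interval `[X, X ∪ J]` with `i ∉ J` has the parity of the number of sets of
`F` plus the number of sets of `F.memberSubfamily i` in that interval. If `i ∉ X`, these two
counts are the sets of `F` in `[X, X ∪ insert i J]` avoiding, resp. containing, `i`; if `i ∈ X`,
the second count is zero and the interval does not change. So applying `\bar{∗} i` amounts to
adding `i` to the interval, and iterating from the one-point interval `[X, X]` gives the theorem.
-/

open scoped symmDiff

/-- The operation `\bar{∗} i`, with feasible sets `F ∆ {I \ {i} : I ∈ F, i ∈ I}`. -/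
def barStar {n : ℕ} (F : Finset (Finset (Fin n))) (i : Fin n) : Finset (Finset (Fin n)) :=
  F ∆ ((F.filter (fun I => i ∈ I)).image (fun I => I.erase i))

/-- `D \bar{∗} I`: the operation applied successively on each element of `I`. -/
noncomputable def barStarSet {n : ℕ} (F : Finset (Finset (Fin n))) (I : Finset (Fin n)) :
    Finset (Finset (Fin n)) :=
  I.toList.foldl barStar F

namespace Finset

variable {α : Type*} [DecidableEq α]

theorem odd_card_symmDiff_iff (s t : Finset α) : Odd #(s ∆ t) ↔ Odd (#s + #t) := by
  have h : #(s ∆ t) + 2 * #(s ∩ t) = #s + #t := by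
    rw [symmDiff_eq_sup_sdiff_inf, sup_eq_union, inf_eq_inter, ← card_union_add_card_inter,
      card_sdiff_of_subset inter_subset_union]
    have := card_le_card (inter_subset_union (s := s) (t := t))
    omega
  rw [← h, Nat.odd_add]
  simp

theorem filter_symmDiff (p : α → Prop) [DecidablePred p] (s t : Finset α) :
    (s ∆ t).filter p = s.filter p ∆ t.filter p := by
  ext x
  simp only [mem_filter, mem_symmDiff]
  tauto

theorem odd_card_filter_subset_and_subset_self_iff (𝒜 : Finset (Finset α)) (X : Finset α) :
    Odd #(𝒜.filter (fun Y => X ⊆ Y ∧ Y ⊆ X)) ↔ X ∈ 𝒜 := by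
  simp_rw [← subset_antisymm_iff, filter_eq]
  split_ifs with h <;> simp [h]

variable {𝒜 : Finset (Finset α)} {a : α} {X J : Finset α}

theorem filter_memberSubfamily_eq_empty (ha : a ∈ X) :
    (𝒜.memberSubfamily a).filter (fun Y => X ⊆ Y ∧ Y ⊆ X ∪ J) = ∅ := by
  ext Y
  simp only [mem_filter, mem_memberSubfamily, notMem_empty, iff_false]
  exact fun ⟨⟨_, haY⟩, hXY, _⟩ => haY (hXY ha)

theorem filter_eq_nonMemberSubfamily_filter (haX : a ∉ X) (haJ : a ∉ J) :
    𝒜.filter (fun Y => X ⊆ Y ∧ Y ⊆ X ∪ J) =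
      (𝒜.filter (fun Y => X ⊆ Y ∧ Y ⊆ X ∪ insert a J)).nonMemberSubfamily a := by
  ext Y
  simp only [mem_filter, mem_nonMemberSubfamily, subset_iff, mem_union, mem_insert]
  grind

theorem filter_memberSubfamily_eq_memberSubfamily_filter (haX : a ∉ X) :
    (𝒜.memberSubfamily a).filter (fun Y => X ⊆ Y ∧ Y ⊆ X ∪ J) =
      (𝒜.filter (fun Y => X ⊆ Y ∧ Y ⊆ X ∪ insert a J)).memberSubfamily a := by
  ext Y
  simp only [mem_filter, mem_memberSubfamily, subset_iff, mem_union, mem_insert]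
  grind

end Finset

open Finset

section

variable {n : ℕ}

theorem barStar_eq_symmDiff_memberSubfamily (F : Finset (Finset (Fin n))) (i : Fin n) :
    barStar F i = F ∆ F.memberSubfamily i := rfl

theorem odd_card_filter_barStar_iff (F : Finset (Finset (Fin n))) {i : Fin n}
    {X J : Finset (Fin n)} (hiJ : i ∉ J) :
    Odd #((barStar F i).filter (fun Y => X ⊆ Y ∧ Y ⊆ X ∪ J)) ↔
      Odd #(F.filter (fun Y => X ⊆ Y ∧ Y ⊆ X ∪ insert i J)) := by
  rw [barStar_eq_symmDiff_memberSubfamily, filter_symmDiff, odd_card_symmDiff_iff]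
  by_cases hiX : i ∈ X
  · rw [filter_memberSubfamily_eq_empty hiX, card_empty, add_zero, union_insert,
      insert_eq_of_mem (mem_union_left J hiX)]
  · rw [filter_eq_nonMemberSubfamily_filter hiX hiJ,
      filter_memberSubfamily_eq_memberSubfamily_filter hiX, add_comm,
      card_memberSubfamily_add_card_nonMemberSubfamily]

theorem mem_foldl_barStar_iff {l : List (Fin n)} (hl : l.Nodup) (F : Finset (Finset (Fin n)))
    (X : Finset (Fin n)) :
    X ∈ l.foldl barStar F ↔ Odd #(F.filter (fun Y => X ⊆ Y ∧ Y ⊆ X ∪ l.toFinset)) := by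
  induction l generalizing F with
  | nil => simp [odd_card_filter_subset_and_subset_self_iff]
  | cons i l ih =>
    obtain ⟨hil, hl⟩ := List.nodup_cons.mp hl
    rw [List.foldl_cons, ih hl, List.toFinset_cons,
      odd_card_filter_barStar_iff F (List.mem_toFinset.not.mpr hil)]

end

/-- `X` is feasible in `D \bar{∗} I` iff the number of `Y ∈ F` with `X ⊆ Y ⊆ X ∪ I` is odd. -/
theorem mem_barStarSet_iff_odd {n : ℕ} (F : Finset (Finset (Fin n))) (I : Finset (Fin n))
    (X : Finset (Fin n)) :
    X ∈ barStarSet F I ↔ Odd (F.filter (fun Y => X ⊆ Y ∧ Y ⊆ X ∪ I)).card := by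
  rw [barStarSet, mem_foldl_barStar_iff I.nodup_toList, toList_toFinset]
end

section
/- Let G ≅ S₃ and g ∈ G, and let g_{c₁}, …, g_{c_m} ∈ G satisfy |g_{c_m} g_{c_{m-1}} ⋯ g_{c₁}| = |g^m|. Then there exist h_{c₁}, …, h_{c_m} ∈ G such that g = h_{c_{i+1}} g_{c_{i+1}} h_{c_i}⁻¹ for all i (indices mod m). In particular one may take h_{c_m} conjugating the product g_{c_m}⋯g_{c₁} to g^m and define h_{c_i} = g^{-(m-i)} h_{c_m} (g_{c_m} ⋯ g_{c_{i+1}}) recursively. -/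
private lemma s3_conj_aux : ∀ x y : Equiv.Perm (Fin 3),
    ((x ^ 2 = 1 ↔ y ^ 2 = 1) ∧ (x ^ 3 = 1 ↔ y ^ 3 = 1)) → IsConj x y := by decide

private lemma s3_conj_of_orderOf_eq {x y : Equiv.Perm (Fin 3)}
    (h : orderOf x = orderOf y) : IsConj x y := by
  apply s3_conj_aux
  constructor <;>
  · rw [← orderOf_dvd_iff_pow_eq_one, ← orderOf_dvd_iff_pow_eq_one, h]

private lemma prod_succ {G : Type*} [Group G] (a : ℕ → G) (n : ℕ) :
    ((List.range (n + 1)).map (fun k => a (n + 1 - k))).prod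
      = a (n + 1) * ((List.range n).map (fun k => a (n - k))).prod := by
  rw [List.range_succ_eq_map]
  have hfun : ((fun k => a (n + 1 - k)) ∘ Nat.succ) = fun k => a (n - k) := by
    funext k; simp [Nat.succ_sub_succ]
  simp [List.map_map, hfun]

/-- If `G ≅ S₃` and the product `g_{c_m} g_{c_{m-1}} ⋯ g_{c₁}` has the same order as `gᵐ`,
then there exist `h_{c₁}, …, h_{c_m}` with `h_{c₀} = h_{c_m}` such that
`g = h_{c_{i+1}} g_{c_{i+1}} h_{c_i}⁻¹` for all `i` (indices mod `m`). -/
theorem exists_conjugating_tuple {G : Type*} [Group G] (e : G ≃* Equiv.Perm (Fin 3))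
    (m : ℕ) (hm : 1 ≤ m) (g : G) (a : ℕ → G)
    (horder : orderOf ((List.range m).map (fun k => a (m - k))).prod = orderOf (g ^ m)) :
    ∃ h : ℕ → G, h 0 = h m ∧
      ∀ i, i < m → g = h (i + 1) * a (i + 1) * (h i)⁻¹ := by
  set P : ℕ → G := fun n => ((List.range n).map (fun k => a (n - k))).prod with hP
  -- conjugacy in S₃
  have horder' : orderOf (e (P m)) = orderOf (e (g ^ m)) := by
    have hx := orderOf_injective e.toMonoidHom e.injective (P m)
    have hy := orderOf_injective e.toMonoidHom e.injective (g ^ m)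
    exact hx.trans (horder.trans hy.symm)
  have hconj : IsConj (P m) (g ^ m) := by
    obtain ⟨d, hd⟩ := isConj_iff.mp (s3_conj_of_orderOf_eq horder')
    refine isConj_iff.mpr ⟨e.symm d, ?_⟩
    apply e.injective
    rw [map_mul, map_mul, map_inv, MulEquiv.apply_symm_apply, hd]
  obtain ⟨c, hc⟩ := isConj_iff.mp hconj
  refine ⟨fun i => g ^ i * c * (P i)⁻¹, ?_, ?_⟩
  · have h0 : P 0 = 1 := by simp [hP]
    have hm' : g ^ m * c = c * P m := by
      rw [← hc]; group
    simp only [h0, pow_zero, inv_one, mul_one, one_mul, hm']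
    group
  · intro i _
    have hs : P (i + 1) = a (i + 1) * P i := prod_succ a i
    dsimp only
    rw [hs]
    group
end
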